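/- arXiv:1212.4326 — 8 statements merged into one kernel-verified Lean document; each statement's English description precedes it below -/
import Mathlib

section
/- In ℝ² with the Euclidean distance, the family {U₁, U₂} with U₁ = {(x₁,x₂) : x₂ > -x₁², x₁ > 0} and U₂ = {(x₁,x₂) : x₂ < x₁², x₁ > 0} is not 1-regularly situated: there is no constant C > 0 such that d(x, ℝ²\(U₁∪U₂)) ≤ C·max(d(x, ℝ²\U₁), d(x, ℝ²\U₂)) for all x ∈ ℝ². Specifically, for x = (t, 0) with t > 0, d(x, ℝ²\(U₁∪U₂)) = t while d(x, ℝ²\Uᵢ) ≤ t² for i = 1,2. -/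
open Metric

/-- The open set `U₁ = {x₂ > -x₁², x₁ > 0}` in `ℝ²`. -/
def U₁ : Set (EuclideanSpace ℝ (Fin 2)) := {p | -(p 0) ^ 2 < p 1 ∧ 0 < p 0}
/-- The open set `U₂ = {x₂ < x₁², x₁ > 0}` in `ℝ²`. -/
def U₂ : Set (EuclideanSpace ℝ (Fin 2)) := {p | p 1 < (p 0) ^ 2 ∧ 0 < p 0}
/-- The point `(t, 0)` of `ℝ²`. -/
noncomputable def pt (t : ℝ) : EuclideanSpace ℝ (Fin 2) := (WithLp.equiv 2 (Fin 2 → ℝ)).symm ![t, 0]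

/-! Both `U₁` and `U₂` omit the points `(t, ∓t²)` at distance `t²` from `(t, 0)`, whereas their
union is the open right half-plane, at distance `t` from `(t, 0)`. As `t → 0⁺`, no constant `C`
can make `t ≤ C t²`. -/

namespace EuclideanSpace

variable {ι : Type*} [Fintype ι] [DecidableEq ι]

theorem dist_sub_smul_single (x : EuclideanSpace ℝ ι) (i : ι) (c : ℝ) :
    dist x (x - c • single i 1) = |c| := by
  simp [norm_smul]

theorem infDist_setOf_apply_nonpos (x : EuclideanSpace ℝ ι) (i : ι) (hx : 0 ≤ x i) :
    infDist x {y | y i ≤ 0} = x i := by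
  have hmem : x - x i • single i 1 ∈ {y : EuclideanSpace ℝ ι | y i ≤ 0} := by simp
  apply le_antisymm
  · calc infDist x {y | y i ≤ 0} ≤ dist x (x - x i • single i 1) := infDist_le_dist_of_mem hmem
      _ = x i := by rw [dist_sub_smul_single, abs_of_nonneg hx]
  · refine (le_infDist ⟨_, hmem⟩).2 fun y (hy : y i ≤ 0) => ?_
    calc x i ≤ dist (x i) (y i) := by rw [Real.dist_eq]; exact le_abs.2 (Or.inl (by linarith))
      _ ≤ dist x y := PiLp.dist_apply_le x y i

end EuclideanSpace

open EuclideanSpace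

@[simp] theorem pt_apply_zero (t : ℝ) : pt t 0 = t := rfl

@[simp] theorem pt_apply_one (t : ℝ) : pt t 1 = 0 := rfl

theorem compl_U₁_union_U₂ : (U₁ ∪ U₂)ᶜ = {p | p 0 ≤ 0} := by
  ext p
  simp only [U₁, U₂, Set.mem_compl_iff, Set.mem_union, Set.mem_ofPred_eq]
  constructor
  · intro h
    by_contra! hp
    rcases le_or_gt (p 1) 0 with h1 | h1
    · exact h (Or.inr ⟨h1.trans_lt (by positivity), hp⟩)
    · exact h (Or.inl ⟨(neg_nonpos.2 (sq_nonneg _)).trans_lt h1, hp⟩)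
  · rintro h (⟨-, h0⟩ | ⟨-, h0⟩) <;> linarith

theorem infDist_pt_compl_U₁_union_U₂ {t : ℝ} (ht : 0 ≤ t) : infDist (pt t) (U₁ ∪ U₂)ᶜ = t := by
  rw [compl_U₁_union_U₂, infDist_setOf_apply_nonpos _ _ (by simpa using ht), pt_apply_zero]

theorem infDist_pt_compl_U₁_le (t : ℝ) : infDist (pt t) U₁ᶜ ≤ t ^ 2 := by
  have hmem : pt t - t ^ 2 • single 1 1 ∈ U₁ᶜ := by simp [U₁]
  calc infDist (pt t) U₁ᶜ ≤ dist (pt t) (pt t - t ^ 2 • single 1 1) := infDist_le_dist_of_mem hmem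
    _ = t ^ 2 := by rw [dist_sub_smul_single, abs_of_nonneg (sq_nonneg t)]

theorem infDist_pt_compl_U₂_le (t : ℝ) : infDist (pt t) U₂ᶜ ≤ t ^ 2 := by
  have hmem : pt t - (-t ^ 2) • single 1 1 ∈ U₂ᶜ := by simp [U₂]
  calc infDist (pt t) U₂ᶜ ≤ dist (pt t) (pt t - (-t ^ 2) • single 1 1) :=
        infDist_le_dist_of_mem hmem
    _ = t ^ 2 := by rw [dist_sub_smul_single, abs_neg, abs_of_nonneg (sq_nonneg t)]

theorem exists_pos_mul_sq_lt (C : ℝ) : ∃ t > 0, C * t ^ 2 < t := by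
  have hC : 0 < |C| + 1 := by positivity
  refine ⟨1 / (|C| + 1), by positivity, ?_⟩
  have key : C * (1 / (|C| + 1)) < 1 := by
    rw [mul_one_div, div_lt_one hC]
    linarith [le_abs_self C]
  have ht : 0 < 1 / (|C| + 1) := by positivity
  nlinarith

/-- The family `{U₁, U₂}` is not `1`-regularly situated: no constant `C > 0` satisfies
`d(x, ℝ²∖(U₁∪U₂)) ≤ C·max(d(x, ℝ²∖U₁), d(x, ℝ²∖U₂))` for all `x`; indeed for `x = (t,0)`
with `t > 0` one has `d(x, ℝ²∖(U₁∪U₂)) = t` while `d(x, ℝ²∖Uᵢ) ≤ t²`. -/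
theorem U₁_U₂_not_one_regularly_situated :
    (¬ ∃ C > (0 : ℝ), ∀ x, infDist x (U₁ ∪ U₂)ᶜ ≤ C * max (infDist x U₁ᶜ) (infDist x U₂ᶜ)) ∧
    (∀ t : ℝ, 0 < t → infDist (pt t) (U₁ ∪ U₂)ᶜ = t ∧
      infDist (pt t) U₁ᶜ ≤ t ^ 2 ∧ infDist (pt t) U₂ᶜ ≤ t ^ 2) := by
  refine ⟨?_, fun t ht =>
    ⟨infDist_pt_compl_U₁_union_U₂ ht.le, infDist_pt_compl_U₁_le t, infDist_pt_compl_U₂_le t⟩⟩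
  rintro ⟨C, hC, hbound⟩
  obtain ⟨t, ht, hlt⟩ := exists_pos_mul_sq_lt C
  have := hbound (pt t)
  rw [infDist_pt_compl_U₁_union_U₂ ht.le] at this
  have hmax := max_le (infDist_pt_compl_U₁_le t) (infDist_pt_compl_U₂_le t)
  linarith [mul_le_mul_of_nonneg_left hmax hC.le]
end

section
/- In ℝ² with the Euclidean distance, the family {U₁, U₃} with U₁ = {(x₁,x₂) : x₂ > -x₁², x₁ > 0} and U₃ = {(x₁,x₂) : x₁ > -x₂², x₂ > 0} is 1-regularly situated: for all x ∈ ℝ², d(x, ℝ²\(U₁∪U₃)) ≤ √2·max(d(x, ℝ²\U₁), d(x, ℝ²\U₃)). -/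
open Metric

/-- The open set `U₃ = {x₁ > -x₂², x₂ > 0}` in `ℝ²`. -/
def U₃ : Set (EuclideanSpace ℝ (Fin 2)) := {p | -(p 1) ^ 2 < p 0 ∧ 0 < p 1}

/-!
Let `y` and `z` be nearest points to `x` in `ℝ² ∖ U₁` and `ℝ² ∖ U₃`. If either lies outside
`U₁ ∪ U₃` there is nothing to prove. Otherwise `y ∈ U₃ ∖ U₁` forces `y₁ ≤ 0` and `z ∈ U₁ ∖ U₃`
forces `z₂ ≤ 0`, so the point `(y₁, z₂)` lies in the closed third quadrant, which misses
`U₁ ∪ U₃`; its squared distance to `x` is at most `d(x, y)² + d(x, z)²`.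
-/

lemma EuclideanSpace.dist_sq_fin_two (x y : EuclideanSpace ℝ (Fin 2)) :
    dist x y ^ 2 = (x 0 - y 0) ^ 2 + (x 1 - y 1) ^ 2 := by
  rw [EuclideanSpace.dist_eq, Fin.sum_univ_two, Real.sq_sqrt (by positivity)]
  simp only [Real.dist_eq, sq_abs]

lemma dist_le_sqrt_two_mul_max (x y z : EuclideanSpace ℝ (Fin 2)) :
    dist x !₂[y 0, z 1] ≤ √2 * max (dist x y) (dist x z) := by
  have hy := EuclideanSpace.dist_sq_fin_two x y
  have hz := EuclideanSpace.dist_sq_fin_two x z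
  have hw := EuclideanSpace.dist_sq_fin_two x !₂[y 0, z 1]
  have hmy : dist x y ^ 2 ≤ max (dist x y) (dist x z) ^ 2 :=
    pow_le_pow_left₀ dist_nonneg (le_max_left _ _) 2
  have hmz : dist x z ^ 2 ≤ max (dist x y) (dist x z) ^ 2 :=
    pow_le_pow_left₀ dist_nonneg (le_max_right _ _) 2
  rw [← sq_le_sq₀ dist_nonneg (by positivity), mul_pow, Real.sq_sqrt zero_le_two]
  simp only [Matrix.cons_val_zero, Matrix.cons_val_one] at hw
  linarith [sq_nonneg (x 1 - y 1), sq_nonneg (x 0 - z 0)]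

theorem infDist_le_sqrt_two_mul_max {F A B : Set (EuclideanSpace ℝ (Fin 2))}
    (hA : IsClosed A) (hB : IsClosed B) (hA₀ : A.Nonempty) (hB₀ : B.Nonempty)
    (hAF : ∀ y ∈ A, y ∉ F → y 0 ≤ 0) (hBF : ∀ z ∈ B, z ∉ F → z 1 ≤ 0)
    (hF : ∀ w : EuclideanSpace ℝ (Fin 2), w 0 ≤ 0 → w 1 ≤ 0 → w ∈ F)
    (x : EuclideanSpace ℝ (Fin 2)) :
    infDist x F ≤ √2 * max (infDist x A) (infDist x B) := by
  obtain ⟨y, hyA, hxy⟩ := hA.exists_infDist_eq_dist hA₀ x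
  obtain ⟨z, hzB, hxz⟩ := hB.exists_infDist_eq_dist hB₀ x
  have hmax : max (dist x y) (dist x z) ≤ √2 * max (dist x y) (dist x z) :=
    le_mul_of_one_le_left (le_max_of_le_left dist_nonneg) Real.one_lt_sqrt_two.le
  rw [hxy, hxz]
  by_cases hyF : y ∈ F
  · exact (infDist_le_dist_of_mem hyF).trans ((le_max_left _ _).trans hmax)
  by_cases hzF : z ∈ F
  · exact (infDist_le_dist_of_mem hzF).trans ((le_max_right _ _).trans hmax)
  have hw : !₂[y 0, z 1] ∈ F := hF _ (hAF y hyA hyF) (hBF z hzB hzF)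
  exact (infDist_le_dist_of_mem hw).trans (dist_le_sqrt_two_mul_max x y z)

lemma isOpen_U₁ : IsOpen U₁ :=
  (isOpen_lt (by fun_prop) (by fun_prop)).and (isOpen_lt continuous_const (by fun_prop))

lemma isOpen_U₃ : IsOpen U₃ :=
  (isOpen_lt (by fun_prop) (by fun_prop)).and (isOpen_lt continuous_const (by fun_prop))

lemma apply_zero_nonpos_of_mem_U₃_of_notMem_U₁ {p : EuclideanSpace ℝ (Fin 2)} (h₃ : p ∈ U₃)
    (h₁ : p ∉ U₁) : p 0 ≤ 0 :=
  not_lt.mp fun hp => h₁ ⟨(neg_nonpos.mpr (sq_nonneg _)).trans_lt h₃.2, hp⟩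

lemma apply_one_nonpos_of_mem_U₁_of_notMem_U₃ {p : EuclideanSpace ℝ (Fin 2)} (h₁ : p ∈ U₁)
    (h₃ : p ∉ U₃) : p 1 ≤ 0 :=
  not_lt.mp fun hp => h₃ ⟨(neg_nonpos.mpr (sq_nonneg _)).trans_lt h₁.2, hp⟩

/-- The family `{U₁, U₃}` is `1`-regularly situated with constant `√2`:
`d(x, ℝ²∖(U₁∪U₃)) ≤ √2 · max(d(x, ℝ²∖U₁), d(x, ℝ²∖U₃))` for all `x ∈ ℝ²`. -/
theorem U₁_U₃_one_regularly_situated :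
    ∀ x, infDist x (U₁ ∪ U₃)ᶜ ≤ Real.sqrt 2 * max (infDist x U₁ᶜ) (infDist x U₃ᶜ) := by
  refine infDist_le_sqrt_two_mul_max isOpen_U₁.isClosed_compl isOpen_U₃.isClosed_compl
    ⟨0, by simp [U₁]⟩ ⟨0, by simp [U₃]⟩ ?_ ?_ ?_
  · intro y hy₁ hy
    exact apply_zero_nonpos_of_mem_U₃_of_notMem_U₁ ((Set.not_notMem.mp hy).resolve_left hy₁) hy₁
  · intro z hz₃ hz
    exact apply_one_nonpos_of_mem_U₁_of_notMem_U₃ ((Set.not_notMem.mp hz).resolve_right hz₃) hz₃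
  · rintro w hw₀ hw₁ (hw | hw)
    exacts [hw₀.not_gt hw.2, hw₁.not_gt hw.2]
end

section
/- Transitivity of linear coverings (COV4): Let M be a metric space and U open. Suppose {Uᵢ}_{i∈I₀} is a finite family with union U that is 1-regularly situated with constant C, and for each i ∈ I₀ the finite family {Uᵢ ∩ Vⱼ}_{j∈Jᵢ} has union Uᵢ and is 1-regularly situated with constant Cᵢ, where each Vⱼ ⊆ U. Then with B = C·maxᵢ Cᵢ, for all x ∈ M: d(x, M\U) ≤ B·max_{j ∈ ⋃ᵢJᵢ} d(x, M\Vⱼ). In particular {Vⱼ}_{j∈⋃ᵢJᵢ} is 1-regularly situated with union U. -/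
/-!
Chain the two linear bounds: `d(x, M∖U) ≤ C · maxᵢ d(x, M∖Uᵢ)` and
`d(x, M∖Uᵢ) ≤ Cᵢ · max_{j ∈ Jᵢ} d(x, M∖(Uᵢ ∩ Vⱼ))`. Each inner distance is at most `d(x, M∖Vⱼ)`
by monotonicity of `d(x, ·)`, which needs `M∖Vⱼ ≠ ∅`; this holds because `Vⱼ ⊆ U`, unless
`M∖U = ∅`, in which case `d(x, M∖U) = 0` and there is nothing to prove.
-/

open Metric Set

instance Finset.finite_subtype_exists_mem {I J : Type*} [Finite I] (Js : I → Finset J) :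
    Finite {j : J // ∃ i, j ∈ Js i} :=
  Finite.of_surjective (fun p : Σ i, Js i => (⟨p.2, p.1, p.2.2⟩ : {j : J // ∃ i, j ∈ Js i}))
    fun ⟨j, i, hj⟩ => ⟨⟨i, j, hj⟩, rfl⟩

theorem Real.iSup_le_iSup_of_forall_exists_le {ι ι' : Type*} [Finite ι'] {f : ι → ℝ}
    {g : ι' → ℝ} (hg : ∀ i', 0 ≤ g i') (h : ∀ i, ∃ i', f i ≤ g i') : ⨆ i, f i ≤ ⨆ i', g i' :=
  Real.iSup_le (fun i => let ⟨i', hi'⟩ := h i; hi'.trans (le_ciSup (finite_range g).bddAbove i'))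
    (Real.iSup_nonneg hg)

theorem le_mul_iSup_mul_of_forall_le {ι : Type*} [Finite ι] {a C T : ℝ} {b c : ι → ℝ}
    (hC : 0 ≤ C) (hc : ∀ i, 0 ≤ c i) (hT : 0 ≤ T)
    (ha : a ≤ C * ⨆ i, b i) (hb : ∀ i, b i ≤ c i * T) : a ≤ (C * ⨆ i, c i) * T := by
  have hbT : ∀ i, b i ≤ (⨆ i, c i) * T := fun i =>
    (hb i).trans (mul_le_mul_of_nonneg_right (le_ciSup (finite_range c).bddAbove i) hT)
  calc a ≤ C * ⨆ i, b i := ha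
    _ ≤ C * ((⨆ i, c i) * T) :=
      mul_le_mul_of_nonneg_left (Real.iSup_le hbT (mul_nonneg (Real.iSup_nonneg hc) hT)) hC
    _ = (C * ⨆ i, c i) * T := (mul_assoc _ _ _).symm

section MetricSpace

variable {M : Type*} [PseudoMetricSpace M]

theorem Metric.infDist_compl_le_infDist_compl (x : M) {A B : Set M} (hAB : A ⊆ B)
    (hB : Bᶜ.Nonempty) : infDist x Aᶜ ≤ infDist x Bᶜ :=
  infDist_le_infDist_of_subset (compl_subset_compl.2 hAB) hB

theorem Metric.iSup_infDist_compl_inter_le_iSup {J : Type*} {p : J → Prop} [Finite {j // p j}]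
    (x : M) (W : Set M) {V : J → Set M} (hV : ∀ j, (V j)ᶜ.Nonempty) {s : Finset J}
    (hs : ∀ j ∈ s, p j) :
    ⨆ j : s, infDist x (W ∩ V j)ᶜ ≤ ⨆ j : {j // p j}, infDist x (V j)ᶜ :=
  Real.iSup_le_iSup_of_forall_exists_le (fun _ => infDist_nonneg) fun j =>
    ⟨⟨j, hs j j.2⟩, infDist_compl_le_infDist_compl x inter_subset_right (hV j)⟩

end MetricSpace

theorem iUnion_biUnion_eq_of_iUnion_eq {X I J : Type*} {U : Set X} {Ui : I → Set X}
    {V : J → Set X} {Js : I → Finset J} (hcover : (⋃ i, Ui i) = U) (hV_sub : ∀ j, V j ⊆ U)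
    (hcov_i : ∀ i, (⋃ j ∈ Js i, (Ui i ∩ V j)) = Ui i) :
    (⋃ i, ⋃ j ∈ Js i, V j) = U := by
  refine (iUnion_subset fun i => iUnion₂_subset fun j _ => hV_sub j).antisymm fun x hx => ?_
  obtain ⟨i, hi⟩ := mem_iUnion.1 (hcover ▸ hx)
  obtain ⟨j, hj, -, hxj⟩ := mem_iUnion₂.1 ((hcov_i i).symm ▸ hi)
  exact mem_iUnion.2 ⟨i, mem_iUnion₂.2 ⟨j, hj, hxj⟩⟩

theorem linear_covering_transitivity_general {M : Type*} [MetricSpace M]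
    {I J : Type*} [Fintype I]
    (U : Set M)
    (Ui : I → Set M) (hcover : (⋃ i, Ui i) = U)
    (C : ℝ) (hC : 0 < C)
    (hreg : ∀ x, infDist x Uᶜ ≤ C * ⨆ i, infDist x (Ui i)ᶜ)
    (V : J → Set M) (hV_sub : ∀ j, V j ⊆ U)
    (Js : I → Finset J)
    (Ci : I → ℝ) (hCi : ∀ i, 0 < Ci i)
    (hcov_i : ∀ i, (⋃ j ∈ Js i, (Ui i ∩ V j)) = Ui i)
    (hreg_i : ∀ i x, infDist x (Ui i)ᶜ ≤ Ci i * ⨆ j : Js i, infDist x (Ui i ∩ V j)ᶜ) :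
    (⋃ i, ⋃ j ∈ Js i, V j) = U ∧
    ∀ x, infDist x Uᶜ ≤
      (C * ⨆ i, Ci i) * ⨆ j : {j : J // ∃ i, j ∈ Js i}, infDist x (V j)ᶜ := by
  refine ⟨iUnion_biUnion_eq_of_iUnion_eq hcover hV_sub hcov_i, fun x => ?_⟩
  have hS : 0 ≤ ⨆ j : {j : J // ∃ i, j ∈ Js i}, infDist x (V j)ᶜ :=
    Real.iSup_nonneg fun _ => infDist_nonneg
  obtain hUc | hUc := Uᶜ.eq_empty_or_nonempty
  · rw [hUc, infDist_empty]
    exact mul_nonneg (mul_nonneg hC.le (Real.iSup_nonneg fun i => (hCi i).le)) hS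
  have hVc : ∀ j, (V j)ᶜ.Nonempty := fun j => hUc.mono (compl_subset_compl.2 (hV_sub j))
  refine le_mul_iSup_mul_of_forall_le hC.le (fun i => (hCi i).le) hS (hreg x) fun i => ?_
  exact (hreg_i i x).trans <| mul_le_mul_of_nonneg_left
    (iSup_infDist_compl_inter_le_iSup x (Ui i) hVc fun j hj => ⟨i, hj⟩) (hCi i).le

/-- COV4 (transitivity of linear coverings): if `{Uᵢ}_{i∈I₀}` covers `U` and is `1`-regularly
situated with constant `C`, and for each `i` the family `{Uᵢ ∩ Vⱼ}_{j∈Jᵢ}` covers `Uᵢ` and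
is `1`-regularly situated with constant `Cᵢ`, with `Vⱼ ⊆ U`, then with `B = C · maxᵢ Cᵢ`
one has `d(x, M∖U) ≤ B · max_{j ∈ ⋃ᵢ Jᵢ} d(x, M∖Vⱼ)` for all `x`; in particular the family
`{Vⱼ}_{j ∈ ⋃ᵢ Jᵢ}` is `1`-regularly situated with union `U`. -/
theorem linear_covering_transitivity {M : Type*} [MetricSpace M]
    {I J : Type*} [Fintype I] [Nonempty I]
    (U : Set M) (hU : IsOpen U)
    (Ui : I → Set M) (hcover : (⋃ i, Ui i) = U)
    (C : ℝ) (hC : 0 < C)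
    (hreg : ∀ x, infDist x Uᶜ ≤ C * ⨆ i, infDist x (Ui i)ᶜ)
    (V : J → Set M) (hV_sub : ∀ j, V j ⊆ U)
    (Js : I → Finset J)
    (Ci : I → ℝ) (hCi : ∀ i, 0 < Ci i)
    (hcov_i : ∀ i, (⋃ j ∈ Js i, (Ui i ∩ V j)) = Ui i)
    (hreg_i : ∀ i x, infDist x (Ui i)ᶜ ≤ Ci i * ⨆ j : Js i, infDist x (Ui i ∩ V j)ᶜ) :
    (⋃ i, ⋃ j ∈ Js i, V j) = U ∧
    ∀ x, infDist x Uᶜ ≤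
      (C * ⨆ i, Ci i) * ⨆ j : {j : J // ∃ i, j ∈ Js i}, infDist x (V j)ᶜ :=
  linear_covering_transitivity_general U Ui hcover C hC hreg V hV_sub Js Ci hCi hcov_i hreg_i
end

section
/- Let M be a metric space, U open, V ⊆ U nonempty, ε > 0, 0 < δ < 1, and set ε' = (ε+δ)/(1−δ). Define V^{ε,U} = {x ∈ M : d(x,V) < ε·d(x, M\U)} and similarly V^{ε',U}. If x ∈ V^{ε,U} and y ∈ M satisfy d(x,y) < δ·d(x, M\U) or d(x,y) < δ·d(y, M\U), then d(y,V) < ε'·d(y, M\U), i.e., y ∈ V^{ε',U}. -/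
open Metric

/-!
Moving from `x` to a nearby `y` changes both distances by at most `d(x,y)`. Under either
closeness hypothesis one gets `(1 - δ)·d(x, M∖U) < d(y, M∖U)` and `(1 - δ)·d(x,y) < δ·d(y, M∖U)`;
feeding these into `d(y,V) ≤ d(x,V) + d(x,y)` gives the enlarged constant `(ε + δ)/(1 - δ)`.
-/

section CloseToSet

variable {α : Type*} [PseudoMetricSpace α] {s : Set α} {x y : α} {δ : ℝ}

lemma one_sub_mul_infDist_lt_of_dist_lt (hδ1 : δ < 1)
    (hxy : dist x y < δ * infDist x s ∨ dist x y < δ * infDist y s) :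
    (1 - δ) * infDist x s < infDist y s := by
  have htri : infDist x s ≤ infDist y s + dist x y := infDist_le_infDist_add_dist
  rcases hxy with h | h
  · linarith
  · have hy : 0 ≤ infDist y s := infDist_nonneg
    calc (1 - δ) * infDist x s ≤ (1 - δ) * (infDist y s + dist x y) := by gcongr
      _ < (1 - δ) * ((1 + δ) * infDist y s) := by gcongr; linarith
      _ ≤ infDist y s := by nlinarith [mul_nonneg (sq_nonneg δ) hy]

lemma one_sub_mul_dist_lt_of_dist_lt (hδ0 : 0 ≤ δ) (hδ1 : δ < 1)
    (hxy : dist x y < δ * infDist x s ∨ dist x y < δ * infDist y s) :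
    (1 - δ) * dist x y < δ * infDist y s := by
  have hx := one_sub_mul_infDist_lt_of_dist_lt hδ1 hxy
  rcases hxy with h | h
  · calc (1 - δ) * dist x y < (1 - δ) * (δ * infDist x s) := by gcongr
      _ = δ * ((1 - δ) * infDist x s) := by ring
      _ ≤ δ * infDist y s := by gcongr
  · nlinarith [dist_nonneg (x := x) (y := y)]

end CloseToSet

theorem mem_enlargement_of_close_general {M : Type*} [MetricSpace M] (U V : Set M)
    (ε δ : ℝ) (hε : 0 < ε) (hδ0 : 0 < δ) (hδ1 : δ < 1)
    (x y : M)
    (hx : infDist x V < ε * infDist x Uᶜ)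
    (hxy : dist x y < δ * infDist x Uᶜ ∨ dist x y < δ * infDist y Uᶜ) :
    infDist y V < (ε + δ) / (1 - δ) * infDist y Uᶜ := by
  have hcompl := one_sub_mul_infDist_lt_of_dist_lt hδ1 hxy
  have hdist := one_sub_mul_dist_lt_of_dist_lt hδ0.le hδ1 hxy
  have htri : infDist y V ≤ infDist x V + dist x y := by
    rw [dist_comm]; exact infDist_le_infDist_add_dist
  rw [div_mul_eq_mul_div, lt_div_iff₀ (by linarith)]
  calc infDist y V * (1 - δ) ≤ (1 - δ) * (infDist x V + dist x y) := by
        rw [mul_comm]; gcongr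
    _ = (1 - δ) * infDist x V + (1 - δ) * dist x y := by ring
    _ < (1 - δ) * (ε * infDist x Uᶜ) + δ * infDist y Uᶜ := by gcongr
    _ = ε * ((1 - δ) * infDist x Uᶜ) + δ * infDist y Uᶜ := by ring
    _ ≤ (ε + δ) * infDist y Uᶜ := by rw [add_mul]; gcongr

/-- If `x ∈ V^{ε,U} = {x | d(x,V) < ε·d(x, M∖U)}` and `y` satisfies
`d(x,y) < δ·d(x, M∖U)` or `d(x,y) < δ·d(y, M∖U)` with `0 < δ < 1`, then
`d(y,V) < ε'·d(y, M∖U)` where `ε' = (ε+δ)/(1−δ)`, i.e. `y ∈ V^{ε',U}`. -/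
theorem mem_enlargement_of_close {M : Type*} [MetricSpace M] (U V : Set M)
    (hU : IsOpen U) (hVU : V ⊆ U) (hV : V.Nonempty) (hUc : Uᶜ.Nonempty)
    (ε δ : ℝ) (hε : 0 < ε) (hδ0 : 0 < δ) (hδ1 : δ < 1)
    (x y : M)
    (hx : infDist x V < ε * infDist x Uᶜ)
    (hxy : dist x y < δ * infDist x Uᶜ ∨ dist x y < δ * infDist y Uᶜ) :
    infDist y V < (ε + δ) / (1 - δ) * infDist y Uᶜ :=
  mem_enlargement_of_close_general U V ε δ hε hδ0 hδ1 x y hx hxy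
end

section
/- Let M be a metric space, U open, V ⊆ U nonempty, ε > 0, 0 < δ < 1, ε' = (ε+δ)/(1−δ), and define V^{ε,U}, V^{ε',U} as above. Then for any x ∈ V^{ε,U}, d(x, M\V^{ε',U}) ≥ δ·d(x, M\U). -/
/-!
If `y` lies outside `V^{ε',U}` at distance `r` from `x`, then `d(y,V) ≤ d(x,V) + r` and
`d(y, M∖U) ≥ d(x, M∖U) - r`, so `ε' (d(x, M∖U) - r) ≤ ε d(x, M∖U) + r`. The choice
`ε' = (ε+δ)/(1-δ)` makes this inequality equivalent to `δ d(x, M∖U) ≤ r`.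
-/

open Metric

section

variable {M : Type*} [MetricSpace M]

def enlargement (V U : Set M) (ε : ℝ) : Set M :=
  {x | infDist x V < ε * infDist x Uᶜ}

theorem compl_subset_compl_enlargement (V U : Set M) (ε : ℝ) :
    Uᶜ ⊆ (enlargement V U ε)ᶜ := fun z hz hzV => by
  have : infDist z V < ε * 0 := infDist_zero_of_mem hz ▸ hzV
  linarith [infDist_nonneg (x := z) (s := V)]

theorem mul_infDist_compl_le_dist_of_notMem_enlargement {V U : Set M} {ε δ : ℝ}
    (hε : 0 ≤ ε) (hδ0 : 0 ≤ δ) (hδ1 : δ < 1) {x y : M} (hx : x ∈ enlargement V U ε)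
    (hy : y ∉ enlargement V U ((ε + δ) / (1 - δ))) :
    δ * infDist x Uᶜ ≤ dist x y := by
  have h1δ : 0 < 1 - δ := by linarith
  have hyV : infDist y V ≤ infDist x V + dist x y := by
    simpa only [dist_comm] using infDist_le_infDist_add_dist (x := y) (y := x) (s := V)
  have hyU : infDist x Uᶜ ≤ infDist y Uᶜ + dist x y := infDist_le_infDist_add_dist
  have hy' : (ε + δ) * infDist y Uᶜ ≤ (1 - δ) * infDist y V := by
    have := (mul_le_mul_iff_of_pos_left h1δ).2 (not_lt.1 hy)
    rwa [← mul_assoc, mul_div_cancel₀ _ h1δ.ne'] at this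
  have key : (1 + ε) * (δ * infDist x Uᶜ) ≤ (1 + ε) * dist x y :=
    calc (1 + ε) * (δ * infDist x Uᶜ)
        = (ε + δ) * infDist x Uᶜ - (1 - δ) * (ε * infDist x Uᶜ) := by ring
      _ ≤ (ε + δ) * (infDist y Uᶜ + dist x y) - (1 - δ) * infDist x V := by
          gcongr
          exact hx.le
      _ ≤ (1 - δ) * (infDist x V + dist x y) + (ε + δ) * dist x y - (1 - δ) * infDist x V := by
          linarith [mul_le_mul_of_nonneg_left hyV h1δ.le]
      _ = (1 + ε) * dist x y := by ring
  exact le_of_mul_le_mul_left key (by linarith)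

end

theorem infDist_compl_enlargement_general {M : Type*} [MetricSpace M] (U V : Set M)
    (hUc : Uᶜ.Nonempty)
    (ε δ : ℝ) (hε : 0 < ε) (hδ0 : 0 < δ) (hδ1 : δ < 1)
    (x : M) (hx : infDist x V < ε * infDist x Uᶜ) :
    δ * infDist x Uᶜ ≤
      infDist x {z | infDist z V < (ε + δ) / (1 - δ) * infDist z Uᶜ}ᶜ :=
  (le_infDist (hUc.mono (compl_subset_compl_enlargement V U _))).2 fun _ hy =>
    mul_infDist_compl_le_dist_of_notMem_enlargement hε.le hδ0.le hδ1 hx hy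

/-- For any `x ∈ V^{ε,U} = {x | d(x,V) < ε·d(x, M∖U)}`, one has
`d(x, M∖V^{ε',U}) ≥ δ·d(x, M∖U)`, where `ε' = (ε+δ)/(1−δ)` and `0 < δ < 1`. -/
theorem infDist_compl_enlargement {M : Type*} [MetricSpace M] (U V : Set M)
    (hU : IsOpen U) (hVU : V ⊆ U) (hV : V.Nonempty) (hUc : Uᶜ.Nonempty)
    (ε δ : ℝ) (hε : 0 < ε) (hδ0 : 0 < δ) (hδ1 : δ < 1)
    (x : M) (hx : infDist x V < ε * infDist x Uᶜ) :
    δ * infDist x Uᶜ ≤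
      infDist x {z | infDist z V < (ε + δ) / (1 - δ) * infDist z Uᶜ}ᶜ :=
  infDist_compl_enlargement_general U V hUc ε δ hε hδ0 hδ1 x hx
end

section
/- Linear covering by enlargement: Let M be a metric space, U open, V ⊆ U nonempty, ε > 0, 0 < δ < 1, ε' = (ε+δ)/(1−δ), and V^{ε',U} = {x : d(x,V) < ε'·d(x, M\U)}. Then U = (U \ cl(V)) ∪ V^{ε',U}, and with C = min(δ, ε, 1) one has for all x ∈ M: C·d(x, M\U) ≤ max( d(x, M\(U\cl(V))), d(x, M\V^{ε',U}) ). -/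
/-!
Points of `U` far from `V` relative to their distance to `M ∖ U`, i.e. outside `V^{ε,U}`, are
at proportional distance from both `M ∖ U` and `cl V`, hence from `M ∖ (U ∖ cl V)`. Points
inside `V^{ε,U}` can move by `δ · d(x, M ∖ U)` and stay in the larger enlargement `V^{ε',U}`,
since `d(·, V)` grows and `d(·, M ∖ U)` shrinks by at most the distance moved, and the choice
`ε' (1 - δ) = ε + δ` absorbs both errors.
-/

open Metric

section

variable {M : Type*} [MetricSpace M]

variable {U V : Set M} {ε : ℝ}

theorem enlargement_subset : enlargement V U ε ⊆ U := by
  intro x hx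
  by_contra hxU
  have hx : infDist x V < ε * infDist x Uᶜ := hx
  rw [infDist_zero_of_mem (s := Uᶜ) hxU, mul_zero] at hx
  exact hx.not_ge infDist_nonneg

theorem inter_closure_subset_enlargement (hU : IsOpen U) (hUc : Uᶜ.Nonempty) (hε : 0 < ε) :
    U ∩ closure V ⊆ enlargement V U ε := by
  rintro x ⟨hxU, hxV⟩
  have hpos : 0 < infDist x Uᶜ :=
    (hU.isClosed_compl.notMem_iff_infDist_pos hUc).mp (not_not_intro hxU)
  show infDist x V < ε * infDist x Uᶜ
  rw [infDist_zero_of_mem_closure hxV]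
  positivity

theorem diff_closure_union_enlargement (hU : IsOpen U) (hUc : Uᶜ.Nonempty) (hε : 0 < ε) :
    (U \ closure V) ∪ enlargement V U ε = U := by
  refine Set.Subset.antisymm (Set.union_subset Set.sdiff_subset enlargement_subset) ?_
  intro x hxU
  by_cases hxV : x ∈ closure V
  · exact Or.inr (inter_closure_subset_enlargement hU hUc hε ⟨hxU, hxV⟩)
  · exact Or.inl ⟨hxU, hxV⟩

theorem min_mul_infDist_le_infDist_compl_diff_closure (hUc : Uᶜ.Nonempty) {x : M}
    (hx : x ∉ enlargement V U ε) :
    min ε 1 * infDist x Uᶜ ≤ infDist x (U \ closure V)ᶜ := by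
  have hx : ε * infDist x Uᶜ ≤ infDist x V := not_lt.mp hx
  have hne : (U \ closure V)ᶜ.Nonempty :=
    hUc.mono (Set.compl_subset_compl.mpr Set.sdiff_subset)
  refine (le_infDist hne).mpr fun y hy => ?_
  rcases not_and_or.mp hy with hyU | hyV
  · calc min ε 1 * infDist x Uᶜ ≤ 1 * infDist x Uᶜ :=
          mul_le_mul_of_nonneg_right (min_le_right ε 1) infDist_nonneg
      _ ≤ dist x y := by rw [one_mul]; exact infDist_le_dist_of_mem hyU
  · calc min ε 1 * infDist x Uᶜ ≤ ε * infDist x Uᶜ :=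
          mul_le_mul_of_nonneg_right (min_le_left ε 1) infDist_nonneg
      _ ≤ infDist x (closure V) := by rwa [infDist_closure]
      _ ≤ dist x y := infDist_le_dist_of_mem (not_not.mp hyV)

theorem ball_subset_enlargement {δ ε' : ℝ} {x : M} (hx : x ∈ enlargement V U ε)
    (hε' : 0 ≤ ε') (hδ : ε + δ ≤ ε' * (1 - δ)) :
    ball x (δ * infDist x Uᶜ) ⊆ enlargement V U ε' := by
  intro y hy
  have hxy : dist y x < δ * infDist x Uᶜ := hy
  have hx : infDist x V < ε * infDist x Uᶜ := hx
  have hUy : infDist x Uᶜ - dist y x ≤ infDist y Uᶜ := by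
    linarith [infDist_le_infDist_add_dist (x := x) (y := y) (s := Uᶜ), dist_comm x y]
  show infDist y V < ε' * infDist y Uᶜ
  calc infDist y V ≤ infDist x V + dist y x := infDist_le_infDist_add_dist
    _ < (ε + δ) * infDist x Uᶜ := by linarith
    _ ≤ ε' * (1 - δ) * infDist x Uᶜ := mul_le_mul_of_nonneg_right hδ infDist_nonneg
    _ ≤ ε' * (infDist x Uᶜ - dist y x) := by
      rw [mul_assoc]; exact mul_le_mul_of_nonneg_left (by linarith) hε'
    _ ≤ ε' * infDist y Uᶜ := mul_le_mul_of_nonneg_left hUy hε'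

theorem mul_infDist_le_infDist_compl_enlargement (hUc : Uᶜ.Nonempty) {δ ε' : ℝ} {x : M}
    (hx : x ∈ enlargement V U ε) (hε' : 0 ≤ ε') (hδ : ε + δ ≤ ε' * (1 - δ)) :
    δ * infDist x Uᶜ ≤ infDist x (enlargement V U ε')ᶜ := by
  have hne : (enlargement V U ε')ᶜ.Nonempty :=
    hUc.mono (Set.compl_subset_compl.mpr enlargement_subset)
  refine (le_infDist hne).mpr fun y hy => not_lt.mp fun hxy => hy ?_
  exact ball_subset_enlargement hx hε' hδ (mem_ball'.mpr hxy)

end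

theorem enlargement_linear_covering_general {M : Type*} [MetricSpace M] (U V : Set M)
    (hU : IsOpen U) (hUc : Uᶜ.Nonempty)
    (ε δ : ℝ) (hε : 0 < ε) (hδ0 : 0 < δ) (hδ1 : δ < 1) :
    U = (U \ closure V) ∪ {x | infDist x V < (ε + δ) / (1 - δ) * infDist x Uᶜ} ∧
    ∀ x, min δ (min ε 1) * infDist x Uᶜ ≤
      max (infDist x (U \ closure V)ᶜ)
        (infDist x {z | infDist z V < (ε + δ) / (1 - δ) * infDist z Uᶜ}ᶜ) := by
  have hε' : 0 ≤ (ε + δ) / (1 - δ) := div_nonneg (by linarith) (by linarith)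
  have hδ : ε + δ ≤ (ε + δ) / (1 - δ) * (1 - δ) := (div_mul_cancel₀ _ (by linarith)).ge
  refine ⟨(diff_closure_union_enlargement hU hUc (div_pos (by linarith) (by linarith))).symm,
    fun x => ?_⟩
  by_cases hx : x ∈ enlargement V U ε
  · refine le_max_of_le_right (le_trans ?_
      (mul_infDist_le_infDist_compl_enlargement hUc hx hε' hδ))
    exact mul_le_mul_of_nonneg_right (min_le_left _ _) infDist_nonneg
  · refine le_max_of_le_left (le_trans ?_
      (min_mul_infDist_le_infDist_compl_diff_closure hUc hx))
    exact mul_le_mul_of_nonneg_right (min_le_right _ _) infDist_nonneg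

/-- Linear covering by enlargement: for `U` open, `V ⊆ U` nonempty, `ε > 0`, `0 < δ < 1`
and `ε' = (ε+δ)/(1−δ)`, setting `V^{ε',U} = {x | d(x,V) < ε'·d(x, M∖U)}`, one has
`U = (U ∖ cl V) ∪ V^{ε',U}` and, with `C = min(δ, ε, 1)`,
`C·d(x, M∖U) ≤ max(d(x, M∖(U∖cl V)), d(x, M∖V^{ε',U}))` for all `x ∈ M`. -/
theorem enlargement_linear_covering {M : Type*} [MetricSpace M] (U V : Set M)
    (hU : IsOpen U) (hVU : V ⊆ U) (hV : V.Nonempty) (hUc : Uᶜ.Nonempty)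
    (ε δ : ℝ) (hε : 0 < ε) (hδ0 : 0 < δ) (hδ1 : δ < 1) :
    U = (U \ closure V) ∪ {x | infDist x V < (ε + δ) / (1 - δ) * infDist x Uᶜ} ∧
    ∀ x, min δ (min ε 1) * infDist x Uᶜ ≤
      max (infDist x (U \ closure V)ᶜ)
        (infDist x {z | infDist z V < (ε + δ) / (1 - δ) * infDist z Uᶜ}ᶜ) :=
  enlargement_linear_covering_general U V hU hUc ε δ hε hδ0 hδ1
end

section
/- Separation of enlargements: Let M be a metric space, U₁, U₂ open with U = U₁ ∪ U₂. For ε > 0 define U₁ᵋ = {x ∈ U₁ : d(x, U₁\U₂) < ε·d(x, M\U₁)} and U₂^{ε'} = {x ∈ U₂ : d(x, U₂\U₁) < ε'·d(x, M\U₂)}. If ε·ε' < 1, then cl(U₁ᵋ) ∩ cl(U₂^{ε'}) ∩ U = ∅. -/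
/-!
Write `a = d(x, M∖U₁)` and `b = d(x, M∖U₂)`. On the closures the strict inequalities defining the
enlargements become non-strict, and since `U₁∖U₂ ⊆ M∖U₂` and `U₂∖U₁ ⊆ M∖U₁`, a point in both
closures satisfies `b ≤ ε a` and `a ≤ ε' b`. As `ε ε' < 1` this forces `a = b = 0`, i.e. `x` lies
in neither `U₁` nor `U₂`.
-/

open Metric

lemma eq_zero_and_eq_zero_of_le_mul_of_le_mul {a b ε ε' : ℝ} (ha : 0 ≤ a) (hb : 0 ≤ b)
    (hab : a ≤ ε' * b) (hba : b ≤ ε * a) (hεε' : ε * ε' < 1) : a = 0 ∧ b = 0 := by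
  have ha₀ : a = 0 := by
    rcases le_or_gt 0 ε' with hε' | hε'
    · nlinarith [mul_le_mul_of_nonneg_left hba hε']
    · nlinarith [mul_nonpos_of_nonpos_of_nonneg hε'.le hb]
  subst ha₀
  exact ⟨rfl, le_antisymm (by simpa using hba) hb⟩

lemma infDist_le_mul_infDist_of_mem_closure {M : Type*} [PseudoMetricSpace M] {s t u : Set M}
    {ε : ℝ} {x : M} (hx : x ∈ closure {y ∈ u | infDist y s < ε * infDist y t}) :
    infDist x s ≤ ε * infDist x t :=
  closure_lt_subset_le (continuous_infDist_pt s) (continuous_const.mul (continuous_infDist_pt t))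
    (closure_mono (fun _ hy => hy.2) hx)

theorem enlargements_separated_general {M : Type*} [MetricSpace M] (U₁ U₂ : Set M)
    (h₁ : IsOpen U₁) (h₂ : IsOpen U₂)
    (hd₁ : (U₁ \ U₂).Nonempty) (hd₂ : (U₂ \ U₁).Nonempty)
    (ε ε' : ℝ) (hεε' : ε * ε' < 1) :
    closure {x ∈ U₁ | infDist x (U₁ \ U₂) < ε * infDist x U₁ᶜ} ∩
      closure {x ∈ U₂ | infDist x (U₂ \ U₁) < ε' * infDist x U₂ᶜ} ∩
      (U₁ ∪ U₂) = ∅ := by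
  refine Set.eq_empty_iff_forall_notMem.2 fun x ⟨⟨hx₁, hx₂⟩, hxU⟩ => ?_
  have ha : infDist x U₁ᶜ ≤ ε' * infDist x U₂ᶜ :=
    (infDist_le_infDist_of_subset (fun _ hy => hy.2) hd₂).trans
      (infDist_le_mul_infDist_of_mem_closure hx₂)
  have hb : infDist x U₂ᶜ ≤ ε * infDist x U₁ᶜ :=
    (infDist_le_infDist_of_subset (fun _ hy => hy.2) hd₁).trans
      (infDist_le_mul_infDist_of_mem_closure hx₁)
  obtain ⟨ha₀, hb₀⟩ :=
    eq_zero_and_eq_zero_of_le_mul_of_le_mul infDist_nonneg infDist_nonneg ha hb hεε'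
  rw [← h₁.isClosed_compl.mem_iff_infDist_zero ⟨_, hd₂.some_mem.2⟩] at ha₀
  rw [← h₂.isClosed_compl.mem_iff_infDist_zero ⟨_, hd₁.some_mem.2⟩] at hb₀
  exact hxU.elim ha₀ hb₀

/-- Separation of enlargements: for `U₁, U₂` open with `U = U₁ ∪ U₂`, set
`U₁ᵋ = {x ∈ U₁ | d(x, U₁∖U₂) < ε·d(x, M∖U₁)}` and
`U₂^{ε'} = {x ∈ U₂ | d(x, U₂∖U₁) < ε'·d(x, M∖U₂)}`. If `ε·ε' < 1` then
`cl(U₁ᵋ) ∩ cl(U₂^{ε'}) ∩ U = ∅`. -/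
theorem enlargements_separated {M : Type*} [MetricSpace M] (U₁ U₂ : Set M)
    (h₁ : IsOpen U₁) (h₂ : IsOpen U₂)
    (hd₁ : (U₁ \ U₂).Nonempty) (hd₂ : (U₂ \ U₁).Nonempty)
    (ε ε' : ℝ) (hε : 0 < ε) (hε' : 0 < ε') (hεε' : ε * ε' < 1) :
    closure {x ∈ U₁ | infDist x (U₁ \ U₂) < ε * infDist x U₁ᶜ} ∩
      closure {x ∈ U₂ | infDist x (U₂ \ U₁) < ε' * infDist x U₂ᶜ} ∩
      (U₁ ∪ U₂) = ∅ :=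
  enlargements_separated_general U₁ U₂ h₁ h₂ hd₁ hd₂ ε ε' hεε'
end

section
/- Let V be a finite-dimensional real normed vector space and γ ⊆ V a proper closed convex cone with nonempty interior. Then for any open subset U ⊆ V, the open set U + γ has Lipschitz boundary; more precisely (in suitable coordinates where γ ⊇ γ₀ = {(x', xₙ) : xₙ > ‖x'‖} near a boundary point), the boundary of U + γ is locally the graph of a 1-Lipschitz function φ: ℝ^{n-1} → ℝ, with U + γ = {(x', xₙ) : xₙ > φ(x')} locally. -/
/-!
Since `γ` is a convex cone, `γ + γ ⊆ γ`, so `W = U + γ` is stable under adding `γ`, in particular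
under adding `γ₀ = {(x', t) | ‖x'‖ < t}`. For such a `W`, a point `(y, s) ∈ W` forces
`(x, t) ∈ W` whenever `s + ‖x - y‖ < t`. Hence every vertical section of `W` is an up-set,
bounded below because `W` misses the boundary point `p`, and comparing the sections over `x` and
`y` shows that `φ(x) = inf {t | (x, t) ∈ W}` is `1`-Lipschitz. Openness of `W` makes the
sections open, so `W` is exactly the strict epigraph of `φ`.
-/

open Pointwise

theorem Convex.add_self_subset_of_smul_mem {𝕜 V : Type*} [Field 𝕜] [LinearOrder 𝕜]
    [IsStrictOrderedRing 𝕜] [AddCommGroup V] [Module 𝕜 V] {γ : Set V} (hconv : Convex 𝕜 γ)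
    (hcone : ∀ c : 𝕜, 0 < c → ∀ q ∈ γ, c • q ∈ γ) : γ + γ ⊆ γ := by
  have h := hconv.add_smul zero_le_one zero_le_one
  rw [one_smul] at h
  rw [← h]
  rintro _ ⟨q, hq, rfl⟩
  exact hcone _ (by norm_num) q hq

theorem Set.add_add_subset_add_of_add_self_subset {V : Type*} [AddCommMonoid V]
    {U γ δ : Set V} (hγ : γ + γ ⊆ γ) (hδ : δ ⊆ γ) : U + γ + δ ⊆ U + γ :=
  calc U + γ + δ ⊆ U + (γ + γ) := by
        rw [add_assoc]; exact Set.add_subset_add_left (Set.add_subset_add_left hδ)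
    _ ⊆ U + γ := Set.add_subset_add_left hγ

section Epigraph

variable {E : Type*} [SeminormedAddCommGroup E]

def upwardCone (E : Type*) [SeminormedAddCommGroup E] : Set (E × ℝ) := {q | ‖q.1‖ < q.2}

def verticalSection (W : Set (E × ℝ)) (x : E) : Set ℝ := {t | (x, t) ∈ W}

/-- Meaningful only when the sections are nonempty and bounded below: otherwise `sInf` is `0`. -/
noncomputable def lowerEnvelope (W : Set (E × ℝ)) (x : E) : ℝ := sInf (verticalSection W x)

variable {W : Set (E × ℝ)}

theorem mem_of_norm_sub_lt (hW : W + upwardCone E ⊆ W) {q : E × ℝ} (hq : q ∈ W) {x : E} {t : ℝ}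
    (h : ‖x - q.1‖ < t - q.2) : (x, t) ∈ W := by
  have hv : ((x - q.1, t - q.2) : E × ℝ) ∈ upwardCone E := h
  have hsum := hW (Set.add_mem_add hq hv)
  rwa [Prod.mk_add_mk, add_sub_cancel, add_sub_cancel] at hsum

theorem bddBelow_verticalSection (hW : W + upwardCone E ⊆ W) {p : E × ℝ} (hp : p ∉ W) (x : E) :
    BddBelow (verticalSection W x) := by
  refine ⟨p.2 - ‖p.1 - x‖, fun t ht => ?_⟩
  by_contra! h
  exact hp (mem_of_norm_sub_lt hW ht (by simp only; linarith))

theorem verticalSection_nonempty (hW : W + upwardCone E ⊆ W) (hne : W.Nonempty) (x : E) :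
    (verticalSection W x).Nonempty := by
  obtain ⟨q, hq⟩ := hne
  exact ⟨q.2 + ‖x - q.1‖ + 1, mem_of_norm_sub_lt hW hq (by linarith)⟩

theorem lipschitzWith_lowerEnvelope (hW : W + upwardCone E ⊆ W) {p : E × ℝ} (hp : p ∉ W)
    (hne : W.Nonempty) : LipschitzWith 1 (lowerEnvelope W) := by
  refine LipschitzWith.of_le_add fun x y => ?_
  rw [← sub_le_iff_le_add]
  refine le_csInf (verticalSection_nonempty hW hne y) fun s hs => ?_
  rw [sub_le_iff_le_add]
  refine le_of_forall_pos_le_add fun ε hε => csInf_le (bddBelow_verticalSection hW hp x) ?_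
  exact mem_of_norm_sub_lt hW hs (by rw [← dist_eq_norm]; simp only; linarith)

theorem eq_setOf_lowerEnvelope_lt (hW : W + upwardCone E ⊆ W) (hWo : IsOpen W) {p : E × ℝ}
    (hp : p ∉ W) (hne : W.Nonempty) : W = {q | lowerEnvelope W q.1 < q.2} := by
  ext ⟨x, t⟩
  constructor
  · intro hq
    have hS : IsOpen (verticalSection W x) := hWo.preimage (Continuous.prodMk_right x)
    obtain ⟨s, hst, hs⟩ := Filter.Eventually.exists_lt (hS.mem_nhds hq)
    exact (csInf_le (bddBelow_verticalSection hW hp x) hs).trans_lt hst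
  · intro hq
    obtain ⟨s, hs, hst⟩ := exists_lt_of_csInf_lt (verticalSection_nonempty hW hne x) hq
    exact mem_of_norm_sub_lt hW hs (by simpa using hst)

theorem IsOpen.exists_lipschitzWith_eq_setOf_lt (hWo : IsOpen W) (hW : W + upwardCone E ⊆ W)
    {p : E × ℝ} (hp : p ∈ frontier W) :
    ∃ φ : E → ℝ, LipschitzWith 1 φ ∧ W = {q | φ q.1 < q.2} := by
  have hpW : p ∉ W := fun h => hp.2 (hWo.interior_eq.symm ▸ h)
  have hne : W.Nonempty := closure_nonempty_iff.mp ⟨p, hp.1⟩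
  exact ⟨lowerEnvelope W, lipschitzWith_lowerEnvelope hW hpW hne,
    eq_setOf_lowerEnvelope_lt hW hWo hpW hne⟩

end Epigraph

theorem add_cone_lipschitz_boundary_general (m : ℕ)
    (γ U : Set (EuclideanSpace ℝ (Fin m) × ℝ))
    (hγ_convex : Convex ℝ γ)
    (hγ_cone : ∀ c : ℝ, 0 < c → ∀ q ∈ γ, c • q ∈ γ)
    (hγ₀ : {q : EuclideanSpace ℝ (Fin m) × ℝ | ‖q.1‖ < q.2} ⊆ γ)
    (hU : IsOpen U)
    (p : EuclideanSpace ℝ (Fin m) × ℝ) (hp : p ∈ frontier (U + γ)) :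
    ∃ φ : EuclideanSpace ℝ (Fin m) → ℝ, LipschitzWith 1 φ ∧
      U + γ = {q : EuclideanSpace ℝ (Fin m) × ℝ | φ q.1 < q.2} := by
  have hγγ : γ + γ ⊆ γ := hγ_convex.add_self_subset_of_smul_mem hγ_cone
  have hW : U + γ + upwardCone _ ⊆ U + γ :=
    Set.add_add_subset_add_of_add_self_subset hγγ hγ₀
  exact hU.add_right.exists_lipschitzWith_eq_setOf_lt hW hp

/-- Let `γ` be a proper closed convex cone with nonempty interior in `ℝⁿ = ℝ^{n-1} × ℝ`,
in coordinates chosen so that `γ` contains the open cone `γ₀ = {(x', t) | t > ‖x'‖}`.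
Then for any open `U`, near any boundary point the open set `U + γ` is the strict epigraph
of a `1`-Lipschitz function `φ : ℝ^{n-1} → ℝ`; in fact
`U + γ = {(x', t) | t > φ(x')}` globally. In particular `U + γ` has Lipschitz boundary. -/
theorem add_cone_lipschitz_boundary (m : ℕ)
    (γ U : Set (EuclideanSpace ℝ (Fin m) × ℝ))
    (hγ_closed : IsClosed γ) (hγ_convex : Convex ℝ γ)
    (hγ_cone : ∀ c : ℝ, 0 < c → ∀ q ∈ γ, c • q ∈ γ)
    (hγ_proper : γ ∩ (-γ) ⊆ {0})
    (hγ₀ : {q : EuclideanSpace ℝ (Fin m) × ℝ | ‖q.1‖ < q.2} ⊆ γ)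
    (hU : IsOpen U)
    (p : EuclideanSpace ℝ (Fin m) × ℝ) (hp : p ∈ frontier (U + γ)) :
    ∃ φ : EuclideanSpace ℝ (Fin m) → ℝ, LipschitzWith 1 φ ∧
      U + γ = {q : EuclideanSpace ℝ (Fin m) × ℝ | φ q.1 < q.2} :=
  add_cone_lipschitz_boundary_general m γ U hγ_convex hγ_cone hγ₀ hU p hp
end
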